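/- Let P, N > 0 and θ₀ ∈ (0, π/2]. Then there exists Δ₁ with 0 < Δ₁ < θ₀ such that h_{θ₀}(π/2 − Δ₁) ≤ (1/2) log((2P+N)/(P+N)) − P Δ₁ / (2(2P+N) ln 2). Consequently, min over ω ∈ (π/2 − θ₀, π/2] of h_{θ₀}(ω) is strictly less than (1/2) log((2P+N)/(P+N)). -/

import Mathlib

/-!
At `ω = π/2` the argument of the logarithm in `h_θ` equals `(2P+N)/(P+N)`, whatever `θ`. Both
`sin²(ω/2)` and `cos² ω` are differentiable there, with derivatives `1/2` and `0`, which gives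
`h_θ'(π/2) = P/((2P+N) ln 2) > 0`. A function with derivative `f'` at `x` lies, just to the left
of `x`, strictly below the line through `(x, f x)` of any slope `c < f'`; taking `c = f'/2`
gives the bound for all small `Δ₁`, and in particular for some `Δ₁ ∈ (0, θ₀)`.
-/

open Real

/-- The function `h_θ(ω)` from the relay-channel bound. -/
noncomputable def hFun (P N θ : ℝ) (ω : ℝ) : ℝ :=
  (1 / 2) * Real.logb 2 (4 * Real.sin (ω / 2) ^ 2 * (P + N - N * Real.sin (ω / 2) ^ 2) *
    Real.sin θ ^ 2 / ((P + N) * (Real.sin θ ^ 2 - Real.cos ω ^ 2)))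

open Filter Topology Set

theorem HasDerivAt.eventually_lt_sub_mul_of_lt {f : ℝ → ℝ} {f' x c : ℝ}
    (hf : HasDerivAt f f' x) (hc : c < f') :
    ∀ᶠ y in 𝓝[<] x, f y < f x - c * (x - y) := by
  have hslope := (hasDerivAt_iff_tendsto_slope.mp hf).mono_left (nhdsLT_le_nhdsNE x)
  filter_upwards [hslope.eventually (lt_mem_nhds hc), self_mem_nhdsWithin] with y hy hyx
  rw [slope_def_field, lt_div_iff_of_neg (sub_neg.mpr hyx)] at hy
  linarith

lemma sin_half_sq_pi_div_two : sin (π / 2 / 2) ^ 2 = 1 / 2 := by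
  rw [show π / 2 / 2 = π / 4 by ring, sin_pi_div_four, div_pow, sq_sqrt zero_le_two]
  norm_num

lemma hasDerivAt_sin_half_sq_pi_div_two :
    HasDerivAt (fun ω => sin (ω / 2) ^ 2) (1 / 2) (π / 2) := by
  refine (((hasDerivAt_id' (π / 2)).div_const 2).sin.fun_pow 2).congr_deriv ?_
  have h := sin_two_mul (π / 2 / 2)
  rw [show 2 * (π / 2 / 2) = π / 2 by ring, sin_pi_div_two] at h
  norm_num
  linarith

lemma hasDerivAt_cos_sq_pi_div_two : HasDerivAt (fun ω => cos ω ^ 2) 0 (π / 2) :=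
  ((hasDerivAt_cos (π / 2)).fun_pow 2).congr_deriv (by simp)

lemma hFun_pi_div_two {P N θ : ℝ} (hPN : P + N ≠ 0) (hθ : sin θ ≠ 0) :
    hFun P N θ (π / 2) = 1 / 2 * logb 2 ((2 * P + N) / (P + N)) := by
  rw [hFun, sin_half_sq_pi_div_two, cos_pi_div_two]
  congr 2
  field_simp
  ring

lemma hasDerivAt_hFun_pi_div_two {P N θ : ℝ} (hPN : P + N ≠ 0) (h2PN : 2 * P + N ≠ 0)
    (hθ : sin θ ≠ 0) :
    HasDerivAt (hFun P N θ) (P / ((2 * P + N) * log 2)) (π / 2) := by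
  have hu := hasDerivAt_sin_half_sq_pi_div_two
  have hden : (P + N) * (sin θ ^ 2 - cos (π / 2) ^ 2) ≠ 0 := by
    rw [cos_pi_div_two]
    simp [hPN, hθ]
  have hval : 4 * sin (π / 2 / 2) ^ 2 * (P + N - N * sin (π / 2 / 2) ^ 2) * sin θ ^ 2 /
      ((P + N) * (sin θ ^ 2 - cos (π / 2) ^ 2)) = (2 * P + N) / (P + N) := by
    rw [sin_half_sq_pi_div_two, cos_pi_div_two]
    field_simp
    ring
  have hg : HasDerivAt (fun ω => 4 * sin (ω / 2) ^ 2 * (P + N - N * sin (ω / 2) ^ 2) *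
      sin θ ^ 2 / ((P + N) * (sin θ ^ 2 - cos ω ^ 2))) (2 * P / (P + N)) (π / 2) := by
    refine ((((hu.const_mul 4).fun_mul ((hu.const_mul N).const_sub (P + N))).mul_const
      (sin θ ^ 2)).fun_div ((hasDerivAt_cos_sq_pi_div_two.const_sub (sin θ ^ 2)).const_mul
      (P + N)) hden).congr_deriv ?_
    rw [sin_half_sq_pi_div_two, cos_pi_div_two]
    field_simp
    ring
  refine (((hg.log (by rw [hval]; exact div_ne_zero h2PN hPN)).div_const (log 2)).const_mul
    (1 / 2)).congr_deriv ?_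
  rw [hval]
  field_simp

/-- for `P, N > 0` and `θ₀ ∈ (0, π/2]`, there exists `Δ₁ ∈ (0, θ₀)` with
`h_{θ₀}(π/2 − Δ₁) ≤ (1/2) log₂((2P+N)/(P+N)) − P Δ₁/(2(2P+N) ln 2)`; consequently the
minimum of `h_{θ₀}` over `ω ∈ (π/2 − θ₀, π/2]` is strictly below
`(1/2) log₂((2P+N)/(P+N))`. -/
theorem stmt_13 (P N : ℝ) (hP : 0 < P) (hN : 0 < N)
    (θ₀ : ℝ) (hθ₀ : θ₀ ∈ Set.Ioc 0 (π / 2)) :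
    ∃ Δ₁ : ℝ, 0 < Δ₁ ∧ Δ₁ < θ₀ ∧
      hFun P N θ₀ (π / 2 - Δ₁) ≤
        (1 / 2) * Real.logb 2 ((2 * P + N) / (P + N)) -
          P * Δ₁ / (2 * (2 * P + N) * Real.log 2) ∧
      ∃ ω ∈ Set.Ioc (π / 2 - θ₀) (π / 2),
        hFun P N θ₀ ω < (1 / 2) * Real.logb 2 ((2 * P + N) / (P + N)) := by
  obtain ⟨hθ₀pos, hθ₀le⟩ := hθ₀
  have hsin : sin θ₀ ≠ 0 := (sin_pos_of_pos_of_lt_pi hθ₀pos (by linarith [pi_pos])).ne'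
  have hderiv := hasDerivAt_hFun_pi_div_two (P := P) (N := N) (by positivity) (by positivity) hsin
  have hslope : 0 < P / ((2 * P + N) * log 2) := by positivity
  obtain ⟨y, hy, hyθ, hyπ⟩ := ((hderiv.eventually_lt_sub_mul_of_lt (half_lt_self hslope)).and
    (Ioo_mem_nhdsLT (by linarith : π / 2 - θ₀ < π / 2))).exists
  rw [hFun_pi_div_two (by positivity) hsin] at hy
  have hdrop : P / ((2 * P + N) * log 2) / 2 * (π / 2 - y) =
      P * (π / 2 - y) / (2 * (2 * P + N) * log 2) := by
    field_simp
  refine ⟨π / 2 - y, by linarith, by linarith, ?_, y, ⟨hyθ, hyπ.le⟩, ?_⟩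
  · rw [sub_sub_cancel]
    linarith
  · have : 0 < P * (π / 2 - y) / (2 * (2 * P + N) * log 2) := by
      have : 0 < π / 2 - y := by linarith
      positivity
    linarith
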